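/- Let r be a coherent risk measure on L^p(Ω; ℝ) with exact dual representation r(η) = sup_{ζ∈𝒵} E(−ηζ)/E(ζ), where 𝒵 ⊆ L^q(Ω; ℝ₊) and E(ζ) > 0 for every ζ ∈ 𝒵. Let K ⊆ ℝ^d be a deterministic closed convex cone with ℝ₋^d ⊆ K ≠ ℝ^d, with dual cone K' = {u ∈ ℝ^d : ⟨u, x⟩ ≤ 0 for all x ∈ K}, and let X ∈ L^p(Ω; ℝ^d). Then ⋂_{ζ ∈ 𝒵, u ∈ ℝ₊^d} {x ∈ ℝ^d : ⟨x, u⟩·E(ζ) ≥ −E(h_{X+K}(u)·ζ)} = ⋂_{u ∈ K'} {x ∈ ℝ^d : r(⟨X, u⟩) ≤ ⟨x, u⟩}, where h_{X+K}(u) denotes the random variable ω ↦ sup{⟨u, y⟩ : y ∈ X(ω) + K} and constraints with E(h_{X+K}(u)·ζ) = +∞ are vacuous. -/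

import Mathlib

open MeasureTheory Set Filter
open scoped Pointwise ENNReal RealInnerProductSpace

noncomputable section

/-- `ℝ^d` with the Euclidean norm. -/
abbrev Vec (d : ℕ) := EuclideanSpace ℝ (Fin d)

/-- Effros measurability of a set-valued map: `{ω : X(ω) ∩ G ≠ ∅}` is measurable
for every open `G`. -/
def EffrosMeasurable {Ω : Type*} [MeasurableSpace Ω] {d : ℕ} (X : Ω → Set (Vec d)) : Prop :=
  ∀ G : Set (Vec d), IsOpen G → MeasurableSet {ω | (X ω ∩ G).Nonempty}

/-- A set-valued portfolio: an Effros-measurable map with nonempty closed convex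
lower-set values. -/
structure IsPortfolio {Ω : Type*} [MeasurableSpace Ω] {d : ℕ} (X : Ω → Set (Vec d)) : Prop where
  effros : EffrosMeasurable X
  nonempty : ∀ ω, (X ω).Nonempty
  isClosed : ∀ ω, IsClosed (X ω)
  convex : ∀ ω, Convex ℝ (X ω)
  lower : ∀ ω, ∀ x ∈ X ω, ∀ y : Vec d, (∀ i, y i ≤ x i) → y ∈ X ω

/-- A coherent risk measure on `L^p(Ω; ℝ)` with values in `ℝ ∪ {+∞} ⊆ EReal`:
monotone (antitone in the gain), cash invariant, subadditive and positively homogeneous. -/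
structure IsCoherent {Ω : Type*} [MeasurableSpace Ω] (μ : Measure Ω) (p : ℝ≥0∞)
    (r : (Ω → ℝ) → EReal) : Prop where
  ne_bot : ∀ ξ : Ω → ℝ, MemLp ξ p μ → r ξ ≠ ⊥
  mono : ∀ ξ η : Ω → ℝ, MemLp ξ p μ → MemLp η p μ → (∀ᵐ ω ∂μ, ξ ω ≤ η ω) → r η ≤ r ξ
  cash : ∀ ξ : Ω → ℝ, MemLp ξ p μ → ∀ c : ℝ, r (fun ω => ξ ω + c) = r ξ - (c : EReal)
  subadd : ∀ ξ η : Ω → ℝ, MemLp ξ p μ → MemLp η p μ →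
    r (fun ω => ξ ω + η ω) ≤ r ξ + r η
  homog : ∀ ξ : Ω → ℝ, MemLp ξ p μ → ∀ c : ℝ, 0 < c →
    r (fun ω => c * ξ ω) = (c : EReal) * r ξ

/-- The selection risk measure `ρ_{s,0}(𝐗)`: the set of deterministic `x ∈ ℝ^d`
for which `𝐗 + x` has a selection with all individually acceptable components. -/
def rho0 {Ω : Type*} [MeasurableSpace Ω] (μ : Measure Ω) (p : ℝ≥0∞) {d : ℕ}
    (r : Fin d → (Ω → ℝ) → EReal) (X : Ω → Set (Vec d)) : Set (Vec d) :=
  {x | ∃ ξ : Ω → Vec d, MemLp ξ p μ ∧ (∀ᵐ ω ∂μ, ξ ω ∈ X ω) ∧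
        ∀ i, r i (fun ω => ξ ω i + x i) ≤ 0}

/-- The support function `h_M(u) = sup{⟨u,x⟩ : x ∈ M}`, with values in `EReal`. -/
def suppFn {d : ℕ} (M : Set (Vec d)) (u : Vec d) : EReal :=
  ⨆ x ∈ M, ((⟪u, x⟫ : ℝ) : EReal)

/-!
For `u` in the dual cone `K'` the support function of `X(ω) + K` is `⟨X(ω), u⟩`, so the constraint
indexed by `(ζ, u)` reads `E(-⟨X, u⟩ ζ) / E(ζ) ≤ ⟨x, u⟩`; taking all `ζ ∈ 𝒵` together, this is
`r(⟨X, u⟩) ≤ ⟨x, u⟩` by the dual representation. For `u ∉ K'` the cone property makes the support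
function `+∞`, and `E(ζ) > 0` forces `ζ > 0` on a non-null set, so such constraints are vacuous.
-/

section SupportFunction

variable {d : ℕ} {K : Set (Vec d)}

lemma suppFn_add_image_of_forall_inner_nonpos (h0 : (0 : Vec d) ∈ K) {u : Vec d}
    (hu : ∀ y ∈ K, ⟪u, y⟫ ≤ 0) (x₀ : Vec d) :
    suppFn ((x₀ + ·) '' K) u = ((⟪x₀, u⟫ : ℝ) : EReal) := by
  rw [suppFn, iSup_image]
  apply le_antisymm
  · refine iSup₂_le fun y hy => ?_
    rw [EReal.coe_le_coe_iff, inner_add_right, real_inner_comm]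
    linarith [hu y hy]
  · exact le_iSup₂_of_le 0 h0 (by simp [real_inner_comm])

lemma suppFn_add_image_eq_top (hK : ∀ c : ℝ, 0 < c → ∀ y ∈ K, c • y ∈ K) {u y : Vec d}
    (hy : y ∈ K) (hyu : 0 < ⟪u, y⟫) (x₀ : Vec d) :
    suppFn ((x₀ + ·) '' K) u = ⊤ := by
  refine EReal.eq_top_iff_forall_lt _ |>.2 fun c => ?_
  obtain ⟨t, ht⟩ := exists_gt (max 0 ((c - ⟪u, x₀⟫) / ⟪u, y⟫))
  have ht₀ : 0 < t := (le_max_left _ _).trans_lt ht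
  have hct : c < ⟪u, x₀ + t • y⟫ := by
    rw [inner_add_right, real_inner_smul_right]
    linarith [(div_lt_iff₀ hyu).1 ((le_max_right _ _).trans_lt ht)]
  rw [suppFn, iSup_image]
  exact (EReal.coe_lt_coe_iff.2 hct).trans_le (le_iSup₂_of_le (t • y) (hK t ht₀ y hy) le_rfl)

lemma nonneg_of_forall_inner_nonpos (hK : {y : Vec d | ∀ i, y i ≤ 0} ⊆ K) {u : Vec d}
    (hu : ∀ y ∈ K, ⟪u, y⟫ ≤ 0) (i : Fin d) : 0 ≤ u i := by
  have hmem : -EuclideanSpace.single i (1 : ℝ) ∈ K := hK fun j => by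
    by_cases h : j = i <;> simp [h]
  simpa [inner_neg_right, EuclideanSpace.inner_single_right] using hu _ hmem

end SupportFunction

section Integrals

variable {Ω : Type*} [MeasurableSpace Ω] {μ : Measure Ω}

lemma not_ae_top_mul_ne_top {ζ : Ω → ℝ} (hζ : 0 < ∫ ω, ζ ω ∂μ) :
    ¬ ∀ᵐ ω ∂μ, (⊤ : EReal) * ((ζ ω : ℝ) : EReal) ≠ ⊤ := by
  intro h
  have hζ_nonpos : ∀ᵐ ω ∂μ, ζ ω ≤ 0 :=
    h.mono fun ω hω => not_lt.1 fun hpos => hω (EReal.top_mul_coe_of_pos hpos)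
  exact (integral_nonpos_of_ae hζ_nonpos).not_gt hζ

lemma div_integral_le_iff {η ζ : Ω → ℝ} (hζ : 0 < ∫ ω, ζ ω ∂μ) (c : ℝ) :
    (∫ ω, -η ω * ζ ω ∂μ) / ∫ ω, ζ ω ∂μ ≤ c ↔ -∫ ω, η ω * ζ ω ∂μ ≤ c * ∫ ω, ζ ω ∂μ := by
  simp only [div_le_iff₀ hζ, neg_mul, integral_neg]

end Integrals

theorem statement10_general {Ω : Type*} [MeasurableSpace Ω] (μ : Measure Ω)
    {d : ℕ} (p q : ℝ≥0∞) (hpq : 1/p + 1/q = 1)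
    (r : (Ω → ℝ) → EReal)
    (𝒵 : Set (Ω → ℝ))
    (h𝒵 : ∀ ζ ∈ 𝒵, MemLp ζ q μ ∧ (∀ᵐ ω ∂μ, 0 ≤ ζ ω) ∧ 0 < ∫ ω, ζ ω ∂μ)
    (hrep : ∀ η : Ω → ℝ, MemLp η p μ →
      r η = ⨆ ζ ∈ 𝒵, (((∫ ω, -η ω * ζ ω ∂μ) / ∫ ω, ζ ω ∂μ : ℝ) : EReal))
    (K : Set (Vec d))
    (hKcone : ∀ c : ℝ, 0 < c → ∀ y ∈ K, c • y ∈ K)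
    (hKneg : {y : Vec d | ∀ i, y i ≤ 0} ⊆ K)
    (X : Ω → Vec d) (hX : MemLp X p μ) :
    (⋂ ζ ∈ 𝒵, ⋂ u ∈ {u : Vec d | ∀ i, 0 ≤ u i},
      {x : Vec d |
        (∀ᵐ ω ∂μ, suppFn ((X ω + ·) '' K) u * ((ζ ω : ℝ) : EReal) ≠ ⊤) →
        Integrable (fun ω => (suppFn ((X ω + ·) '' K) u * ((ζ ω : ℝ) : EReal)).toReal) μ →
        -∫ ω, (suppFn ((X ω + ·) '' K) u * ((ζ ω : ℝ) : EReal)).toReal ∂μ ≤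
          ⟪x, u⟫ * ∫ ω, ζ ω ∂μ}) =
    ⋂ u ∈ {u : Vec d | ∀ y ∈ K, ⟪u, y⟫ ≤ 0},
      {x : Vec d | r (fun ω => ⟪X ω, u⟫) ≤ ((⟪x, u⟫ : ℝ) : EReal)} := by
  have hprod {u : Vec d} (hu : ∀ y ∈ K, ⟪u, y⟫ ≤ 0) (ζ : Ω → ℝ) (ω : Ω) :
      suppFn ((X ω + ·) '' K) u * ((ζ ω : ℝ) : EReal) = ((⟪X ω, u⟫ * ζ ω : ℝ) : EReal) := by
    rw [suppFn_add_image_of_forall_inner_nonpos (hKneg fun _ => le_rfl) hu, EReal.coe_mul]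
  have : ENNReal.HolderConjugate p q := ENNReal.holderConjugate_iff.2 (by simpa using hpq)
  have hrisk (x u : Vec d) : r (fun ω => ⟪X ω, u⟫) ≤ ((⟪x, u⟫ : ℝ) : EReal) ↔
      ∀ ζ ∈ 𝒵, -∫ ω, ⟪X ω, u⟫ * ζ ω ∂μ ≤ ⟪x, u⟫ * ∫ ω, ζ ω ∂μ := by
    simp only [hrep _ (hX.inner_const u), iSup₂_le_iff, EReal.coe_le_coe_iff]
    exact forall₂_congr fun ζ hζ => div_integral_le_iff (h𝒵 ζ hζ).2.2 _
  ext x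
  simp only [mem_iInter, mem_ofPred_eq, hrisk]
  constructor
  · intro h u hu ζ hζ
    have hint : Integrable (fun ω => ⟪X ω, u⟫ * ζ ω) μ :=
      (hX.inner_const u).integrable_mul (h𝒵 ζ hζ).1
    simpa only [hprod hu, EReal.toReal_coe] using
      h ζ hζ u (nonneg_of_forall_inner_nonpos hKneg hu)
        (ae_of_all _ fun ω => hprod hu ζ ω ▸ EReal.coe_ne_top _)
        (by simpa only [hprod hu, EReal.toReal_coe] using hint)
  · intro h ζ hζ u _ hfin _
    by_cases hu : ∀ y ∈ K, ⟪u, y⟫ ≤ 0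
    · simpa only [hprod hu, EReal.toReal_coe] using h u hu ζ hζ
    · obtain ⟨y, hy, hyu⟩ : ∃ y ∈ K, 0 < ⟪u, y⟫ := by simpa using hu
      simp only [suppFn_add_image_eq_top hKcone hy hyu] at hfin
      exact absurd hfin (not_ae_top_mul_ne_top (h𝒵 ζ hζ).2.2)

/-- Proposition 5.1: for a deterministic exchange cone `K` and identical marginal risk
measures with exact dual representation,
`ρ_{𝒵₀}(X + K) = ⋂_{u ∈ K'} {x : r(⟨X,u⟩) ≤ ⟨x,u⟩}`. -/
theorem statement10 {Ω : Type*} [MeasurableSpace Ω] (μ : Measure Ω) [IsProbabilityMeasure μ]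
    [μ.IsComplete] {d : ℕ} (p q : ℝ≥0∞) (hp : 1 ≤ p) (hpq : 1/p + 1/q = 1)
    (r : (Ω → ℝ) → EReal) (hr : IsCoherent μ p r)
    (𝒵 : Set (Ω → ℝ)) (h𝒵ne : 𝒵.Nonempty)
    (h𝒵 : ∀ ζ ∈ 𝒵, MemLp ζ q μ ∧ (∀ᵐ ω ∂μ, 0 ≤ ζ ω) ∧ 0 < ∫ ω, ζ ω ∂μ)
    (hrep : ∀ η : Ω → ℝ, MemLp η p μ →
      r η = ⨆ ζ ∈ 𝒵, (((∫ ω, -η ω * ζ ω ∂μ) / ∫ ω, ζ ω ∂μ : ℝ) : EReal))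
    (K : Set (Vec d)) (hKcl : IsClosed K) (hKconv : Convex ℝ K)
    (hKcone : ∀ c : ℝ, 0 < c → ∀ y ∈ K, c • y ∈ K)
    (hKneg : {y : Vec d | ∀ i, y i ≤ 0} ⊆ K) (hKuniv : K ≠ Set.univ)
    (X : Ω → Vec d) (hX : MemLp X p μ) :
    (⋂ ζ ∈ 𝒵, ⋂ u ∈ {u : Vec d | ∀ i, 0 ≤ u i},
      {x : Vec d |
        (∀ᵐ ω ∂μ, suppFn ((X ω + ·) '' K) u * ((ζ ω : ℝ) : EReal) ≠ ⊤) →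
        Integrable (fun ω => (suppFn ((X ω + ·) '' K) u * ((ζ ω : ℝ) : EReal)).toReal) μ →
        -∫ ω, (suppFn ((X ω + ·) '' K) u * ((ζ ω : ℝ) : EReal)).toReal ∂μ ≤
          ⟪x, u⟫ * ∫ ω, ζ ω ∂μ}) =
    ⋂ u ∈ {u : Vec d | ∀ y ∈ K, ⟪u, y⟫ ≤ 0},
      {x : Vec d | r (fun ω => ⟪X ω, u⟫) ≤ ((⟪x, u⟫ : ℝ) : EReal)} :=
  statement10_general μ p q hpq r 𝒵 h𝒵 hrep K hKcone hKneg X hX
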